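/- Let M be a set of monomials of K[x_1,…,x_n] whose images in A are K-linearly independent. Then for every t ≥ δ(M), the images in A_0 of the elements of M_t are K-linearly independent. -/

import Mathlib

open MvPolynomial

/-- The homogenization `f⁰` of `f` with respect to a new variable `x₀` (encoded as `none`). -/
noncomputable def homog {K : Type*} [CommRing K] {n : ℕ}
    (f : MvPolynomial (Fin n) K) : MvPolynomial (Option (Fin n)) K :=
  ∑ j ∈ Finset.range (f.totalDegree + 1),
    (X none) ^ (f.totalDegree - j) * rename Option.some (homogeneousComponent j f)

/-- The degree of the monomial with exponent vector `m`. -/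
def degm {n : ℕ} (m : Fin n →₀ ℕ) : ℕ := m.sum fun _ e => e

/-- The element `m · x₀^(t - deg m)` of `M_t` corresponding to a monomial `m ∈ M`. -/
noncomputable def mtk (K : Type*) [CommRing K] {n : ℕ} (t : ℕ) (m : Fin n →₀ ℕ) :
    MvPolynomial (Option (Fin n)) K :=
  (X none) ^ (t - degm m) * rename Option.some (monomial m (1 : K))

/-- Dehomogenization: `x₀ ↦ 1`. -/
noncomputable def dehom {K : Type*} [CommRing K] {n : ℕ} :
    MvPolynomial (Option (Fin n)) K →ₐ[K] MvPolynomial (Fin n) K :=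
  aeval (fun o => o.elim 1 X)

lemma dehom_rename {K : Type*} [CommRing K] {n : ℕ} (p : MvPolynomial (Fin n) K) :
    dehom (rename Option.some p) = p := by
  simp only [dehom, aeval_rename]
  have : ((fun o : Option (Fin n) => o.elim (1 : MvPolynomial (Fin n) K) X) ∘ Option.some)
      = X := rfl
  rw [this, aeval_X_left, AlgHom.id_apply]

lemma dehom_homog {K : Type*} [CommRing K] {n : ℕ} (p : MvPolynomial (Fin n) K) :
    dehom (homog p) = p := by
  rw [homog, map_sum]
  have : ∀ j ∈ Finset.range (p.totalDegree + 1),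
      dehom ((X none : MvPolynomial (Option (Fin n)) K) ^ (p.totalDegree - j) *
        rename Option.some (homogeneousComponent j p)) = homogeneousComponent j p := by
    intro j _
    rw [map_mul, map_pow, dehom_rename]
    simp [dehom]
  rw [Finset.sum_congr rfl this, sum_homogeneousComponent]

lemma dehom_mtk {K : Type*} [CommRing K] {n : ℕ} (t : ℕ) (m : Fin n →₀ ℕ) :
    dehom (mtk K t m) = monomial m (1 : K) := by
  rw [mtk, map_mul, map_pow, dehom_rename]
  simp [dehom]

theorem linearIndependent_homogenized_of_linearIndependent
    {K : Type*} [Field K] {n : ℕ} (d : Fin n → ℕ) (hd : ∀ i, 1 ≤ d i)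
    (f : Fin n → MvPolynomial (Fin n) K) (hdeg : ∀ i, (f i).totalDegree = d i)
    (M : Finset (Fin n →₀ ℕ))
    (I : Ideal (MvPolynomial (Fin n) K)) (hI : I = Ideal.span (Set.range f))
    (J : Ideal (MvPolynomial (Option (Fin n)) K))
    (hJ : J = Ideal.span (Set.range fun i => homog (f i)))
    -- the images in A = K[x₁,…,xₙ]/I of the monomials of M are K-linearly independent
    (hLI : LinearIndependent K
      (fun m : M => Ideal.Quotient.mk I (monomial (m : Fin n →₀ ℕ) (1 : K)))) :
    -- for every t ≥ δ(M), the images in A₀ of the elements of M_t are K-linearly independent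
    ∀ t : ℕ, M.sup degm ≤ t →
      LinearIndependent K
        (fun m : M => Ideal.Quotient.mk J (mtk K t (m : Fin n →₀ ℕ))) := by
  intro t ht
  set ψ : MvPolynomial (Option (Fin n)) K →ₐ[K] MvPolynomial (Fin n) K ⧸ I :=
    (Ideal.Quotient.mkₐ K I).comp dehom with hψ
  have hker : ∀ a ∈ J, ψ a = 0 := by
    intro a ha
    rw [hJ] at ha
    have hle : Ideal.span (Set.range fun i => homog (f i)) ≤ RingHom.ker ψ.toRingHom := by
      rw [Ideal.span_le]
      rintro _ ⟨i, rfl⟩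
      simp only [SetLike.mem_coe, RingHom.mem_ker, AlgHom.toRingHom_eq_coe, RingHom.coe_coe,
        hψ, AlgHom.comp_apply, dehom_homog, Ideal.Quotient.mkₐ_eq_mk]
      rw [Ideal.Quotient.eq_zero_iff_mem, hI]
      exact Ideal.subset_span ⟨i, rfl⟩
    exact hle ha
  set L : (MvPolynomial (Option (Fin n)) K ⧸ J) →ₐ[K] (MvPolynomial (Fin n) K ⧸ I) :=
    Ideal.Quotient.liftₐ J ψ hker with hL
  refine LinearIndependent.of_comp L.toLinearMap ?_
  have : (L.toLinearMap ∘ fun m : M => Ideal.Quotient.mk J (mtk K t (m : Fin n →₀ ℕ)))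
      = fun m : M => Ideal.Quotient.mk I (monomial (m : Fin n →₀ ℕ) (1 : K)) := by
    funext m
    simp only [Function.comp_apply, AlgHom.toLinearMap_apply, hL, Ideal.Quotient.liftₐ_apply,
      Ideal.Quotient.lift_mk]
    simp [hψ, dehom_mtk]
  rw [this]
  exact hLI
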